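/- arXiv:2605.06194 — 2 statements merged into one kernel-verified Lean document; each statement's English description precedes it below -/
import Mathlib

section
/- There exists a non-integralizable instance with 6 voters and only four candidates: for N = {1,…,6}, k = 2, types R_c = {{1,2,6},{4,5,6},{2,3,4},{1,3,5}} each with supply 1, the vector u = (1,1,1,1,1,1) is fractional-committee-feasible (x_R = 1/2 for all four types) but not integral-committee-feasible. -/
/-- Candidate types: non-empty subsets of the voter set `Fin n`. -/
abbrev Typ (n : ℕ) := {S : Finset (Fin n) // S.Nonempty}

/-- Utility of voter `i` under an integral committee `x`. -/
def intUtil {n : ℕ} (x : Typ n → ℕ) (i : Fin n) : ℤ :=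
  ∑ R : Typ n, if i ∈ R.1 then (x R : ℤ) else 0

/-- Utility of voter `i` under a fractional committee `x`. -/
def fracUtil {n : ℕ} (x : Typ n → ℝ) (i : Fin n) : ℝ :=
  ∑ R : Typ n, if i ∈ R.1 then x R else 0

/-- `x` is an integral committee for the instance `(c, k)`. -/
def IsIntCommittee {n : ℕ} (c : Typ n → ℕ) (k : ℕ) (x : Typ n → ℕ) : Prop :=
  (∀ R, x R ≤ c R) ∧ (∑ R : Typ n, x R) ≤ k

/-- `x` is a fractional committee for the instance `(c, k)`. -/
def IsFracCommittee {n : ℕ} (c : Typ n → ℕ) (k : ℕ) (x : Typ n → ℝ) : Prop :=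
  (∀ R, 0 ≤ x R) ∧ (∀ R, x R ≤ (c R : ℝ)) ∧ (∑ R : Typ n, x R) ≤ (k : ℝ)

/-- `u` is integral-committee-feasible in `(c, k)`. -/
def IntFeasible {n : ℕ} (c : Typ n → ℕ) (k : ℕ) (u : Fin n → ℤ) : Prop :=
  ∃ x : Typ n → ℕ, IsIntCommittee c k x ∧ ∀ i, u i ≤ intUtil x i

/-- `u` is fractional-committee-feasible in `(c, k)`. -/
def FracFeasible {n : ℕ} (c : Typ n → ℕ) (k : ℕ) (u : Fin n → ℤ) : Prop :=
  ∃ x : Typ n → ℝ, IsFracCommittee c k x ∧ ∀ i, (u i : ℝ) ≤ fracUtil x i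

/-- `(c, k)` is integralizable. -/
def Integralizable {n : ℕ} (c : Typ n → ℕ) (k : ℕ) : Prop :=
  ∀ u : Fin n → ℤ, FracFeasible c k u → IntFeasible c k u

/-- The four-candidates supply vector on six voters
(types `{1,2,6}, {4,5,6}, {2,3,4}, {1,3,5}` in 1-indexed notation). -/
def cFourCandidates : Typ 6 → ℕ := fun R =>
  if R.1 = ({0, 1, 5} : Finset (Fin 6)) ∨ R.1 = ({3, 4, 5} : Finset (Fin 6)) ∨
     R.1 = ({1, 2, 3} : Finset (Fin 6)) ∨ R.1 = ({0, 2, 4} : Finset (Fin 6))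
  then 1 else 0


/-!
Every voter lies in exactly two of the four triples, so taking half of each triple is a fractional
committee of size 2 giving every voter utility 1. An integral committee, however, uses at most two
of the triples, and any two of them meet, so they cover at most five voters.
-/

open Finset

section General

variable {n : ℕ}

lemma fracUtil_const_mul (t : ℝ) (x : Typ n → ℝ) (i : Fin n) :
    fracUtil (fun R => t * x R) i = t * fracUtil x i := by
  simp only [fracUtil, mul_sum, mul_ite, mul_zero]

lemma fracUtil_natCast (x : Typ n → ℕ) (i : Fin n) :
    fracUtil (fun R => (x R : ℝ)) i = intUtil x i := by
  simp only [fracUtil, intUtil]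
  push_cast
  rfl

lemma isFracCommittee_const_mul {c : Typ n → ℕ} {k : ℕ} {t : ℝ} (ht₀ : 0 ≤ t) (ht₁ : t ≤ 1)
    (hk : t * ∑ R, (c R : ℝ) ≤ k) : IsFracCommittee c k (fun R => t * c R) := by
  refine ⟨fun R => by positivity, fun R => ?_, by rwa [← mul_sum]⟩
  exact mul_le_of_le_one_left (Nat.cast_nonneg _) ht₁

lemma fracFeasible_of_const_mul {c : Typ n → ℕ} {k : ℕ} {u : Fin n → ℤ} (t : ℝ) (ht₀ : 0 ≤ t)
    (ht₁ : t ≤ 1) (hk : t * ∑ R, (c R : ℝ) ≤ k) (hu : ∀ i, (u i : ℝ) ≤ t * intUtil c i) :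
    FracFeasible c k u :=
  ⟨_, isFracCommittee_const_mul ht₀ ht₁ hk,
    fun i => by rw [fracUtil_const_mul, fracUtil_natCast]; exact hu i⟩

lemma exists_mem_ne_zero_of_one_le_intUtil {x : Typ n → ℕ} {i : Fin n} (h : 1 ≤ intUtil x i) :
    ∃ R : Typ n, i ∈ R.1 ∧ x R ≠ 0 := by
  have hpos : intUtil x i ≠ 0 := by omega
  obtain ⟨R, -, hR⟩ := exists_ne_zero_of_sum_ne_zero hpos
  by_cases hi : i ∈ R.1
  · exact ⟨R, hi, by simpa [hi] using hR⟩
  · simp [hi] at hR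

lemma card_filter_ne_zero_le_sum {ι : Type*} [Fintype ι] (x : ι → ℕ) :
    #(univ.filter (x · ≠ 0)) ≤ ∑ a, x a := by
  calc #(univ.filter (x · ≠ 0)) = ∑ a ∈ univ.filter (x · ≠ 0), 1 := card_eq_sum_ones _
    _ ≤ ∑ a ∈ univ.filter (x · ≠ 0), x a :=
        sum_le_sum fun a ha => Nat.one_le_iff_ne_zero.mpr (mem_filter.mp ha).2
    _ = ∑ a, x a := sum_filter_ne_zero _

lemma IntFeasible.exists_cover {c : Typ n → ℕ} {k : ℕ} (h : IntFeasible c k (fun _ => 1)) :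
    ∃ S ⊆ univ.filter (c · ≠ 0), #S ≤ k ∧ ∀ i, ∃ R ∈ S, i ∈ R.1 := by
  obtain ⟨x, ⟨hxc, hxk⟩, hu⟩ := h
  refine ⟨univ.filter (x · ≠ 0), fun R hR => ?_, (card_filter_ne_zero_le_sum x).trans hxk,
    fun i => ?_⟩
  · have := hxc R
    simp only [mem_filter, mem_univ, true_and] at hR ⊢
    omega
  · obtain ⟨R, hi, hR⟩ := exists_mem_ne_zero_of_one_le_intUtil (hu i)
    exact ⟨R, by simpa using hR, hi⟩

end General

lemma sum_cFourCandidates : ∑ R, (cFourCandidates R : ℝ) = 4 := by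
  rw [← Nat.cast_sum, show ∑ R, cFourCandidates R = 4 by decide, Nat.cast_ofNat]

lemma intUtil_cFourCandidates (i : Fin 6) : intUtil cFourCandidates i = 2 := by
  revert i
  decide

lemma not_cover_two_cFourCandidates :
    ∀ S ⊆ univ.filter (cFourCandidates · ≠ 0), #S ≤ 2 → ∃ i : Fin 6, ∀ R ∈ S, i ∉ R.1 := by
  decide

/-- The four-candidates instance with `n = 6`, `k = 2` is not integralizable:
`u = (1,1,1,1,1,1)` is fractional-committee-feasible but not
integral-committee-feasible. -/
theorem stmt4 :
    FracFeasible cFourCandidates 2 (fun _ => 1) ∧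
    ¬ IntFeasible cFourCandidates 2 (fun _ => 1) := by
  constructor
  · exact fracFeasible_of_const_mul (1 / 2) (by norm_num) (by norm_num)
      (by rw [sum_cFourCandidates]; norm_num) (fun i => by rw [intUtil_cFourCandidates]; norm_num)
  · intro h
    obtain ⟨S, hS, hcard, hcover⟩ := h.exists_cover
    obtain ⟨i, hi⟩ := not_cover_two_cFourCandidates S hS hcard
    obtain ⟨R, hR, hiR⟩ := hcover i
    exact hi R hR hiR
end

section
/- For n = 4 voters, every instance (c,k) is integralizable: every integer utility vector that is fractional-committee-feasible is also integral-committee-feasible. -/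
/-!
Induction on `k`. Let `x` be a fractional committee and `D` the set of voters with positive
demand; the trace of a type `R` is `R ∩ D`. Suppose some type `R₀` with `x R₀ > 0`, together with
the types whose trace lies in `R₀`, carries mass at least `∑ x - (k - 1)`. Removing at most one
unit of mass from these types, all of `R₀` up to one unit first, brings the total down to
`k - 1`; voters of `R₀` lose at most one unit of utility and the other voters of `D` lose
nothing, so one seat of `R₀` reduces the instance to one with `k - 1` seats.

Otherwise all these masses are below `∑ x - (k - 1) ≤ 1`. Pushing `x` forward onto the maximal
traces yields an antichain of proper subsets of `D` with weights in `(0, 1)` that still covers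
every demand, so each voter of `D` lies in more members than it demands. Choosing at most `k`
members that cover the demands is then a finite problem on four voters: either one member can be
dropped, or `D` is everything and the antichain is a triple plus sets through the missing voter,
or a graph of minimum degree two on four vertices, which has a perfect matching to keep or to
delete (when all six pairs are present and `k = 3`, one pair and a matching avoiding it).
One type of positive capacity per chosen trace is the integral committee.
-/

open Finset

section Utilities

variable {n : ℕ}

lemma fracUtil_eq_sum_filter (x : Typ n → ℝ) (i : Fin n) :
    fracUtil x i = ∑ R with i ∈ R.1, x R :=
  (sum_filter _ _).symm

lemma fracUtil_nonneg {x : Typ n → ℝ} (hx : ∀ R, 0 ≤ x R) (i : Fin n) : 0 ≤ fracUtil x i := by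
  rw [fracUtil_eq_sum_filter]
  exact sum_nonneg fun R _ => hx R

lemma fracUtil_le_sum {x : Typ n → ℝ} (hx : ∀ R, 0 ≤ x R) (i : Fin n) :
    fracUtil x i ≤ ∑ R, x R := by
  rw [fracUtil_eq_sum_filter]
  exact sum_le_sum_of_subset_of_nonneg (filter_subset _ _) fun R _ _ => hx R

lemma fracUtil_sub (x d : Typ n → ℝ) (i : Fin n) :
    fracUtil (x - d) i = fracUtil x i - fracUtil d i := by
  simp only [fracUtil_eq_sum_filter, Pi.sub_apply, sum_sub_distrib]

lemma intUtil_add (y z : Typ n → ℕ) (i : Fin n) :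
    intUtil (y + z) i = intUtil y i + intUtil z i := by
  simp only [intUtil, Pi.add_apply, Nat.cast_add, ite_add_zero, sum_add_distrib]

lemma intUtil_single (R₀ : Typ n) (i : Fin n) :
    intUtil (Pi.single R₀ 1) i = if i ∈ R₀.1 then 1 else 0 := by
  unfold intUtil
  rw [sum_eq_single R₀ (fun R _ hR => by simp [hR]) (by simp)]
  simp

lemma intUtil_indicator (S : Finset (Typ n)) (i : Fin n) :
    intUtil (fun R => if R ∈ S then 1 else 0) i = #{R ∈ S | i ∈ R.1} := by
  simp only [intUtil, apply_ite (Nat.cast (R := ℤ)), Nat.cast_one, Nat.cast_zero, ← ite_and,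
    sum_boole]
  congr 2
  ext R
  simp [and_comm]

lemma intUtil_nonneg (y : Typ n → ℕ) (i : Fin n) : 0 ≤ intUtil y i :=
  sum_nonneg fun R _ => by split_ifs <;> positivity

end Utilities

section Reduction

variable {n : ℕ} {c : Typ n → ℕ} {k : ℕ} {u : Fin n → ℤ}

lemma intFeasible_of_nonpos (hu : ∀ i, u i ≤ 0) : IntFeasible c k u :=
  ⟨0, ⟨fun _ => Nat.zero_le _, by simp⟩, fun i => (hu i).trans (intUtil_nonneg 0 i)⟩

lemma intFeasible_succ_of_update {R₀ : Typ n} (hc : 0 < c R₀)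
    (h : IntFeasible (Function.update c R₀ (c R₀ - 1)) k
      (fun i => u i - if i ∈ R₀.1 then 1 else 0)) :
    IntFeasible c (k + 1) u := by
  obtain ⟨y, ⟨hyc, hyk⟩, hyu⟩ := h
  refine ⟨y + Pi.single R₀ 1, ⟨fun R => ?_, ?_⟩, fun i => ?_⟩
  · have := hyc R
    rcases eq_or_ne R R₀ with rfl | hR
    · simp only [Function.update_self] at this
      simp only [Pi.add_apply, Pi.single_eq_same]
      omega
    · simpa [hR] using this
  · simp only [Pi.add_apply]
    rw [sum_add_distrib, sum_pi_single']
    simpa using hyk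
  · have := hyu i
    rw [intUtil_add, intUtil_single]
    linarith

noncomputable def traceMass (x : Typ n → ℝ) (D E : Finset (Fin n)) : ℝ :=
  ∑ R with R.1 ∩ D ⊆ E, x R

lemma fracFeasible_update_of_removal {x d : Typ n → ℝ} {D : Finset (Fin n)} {R₀ : Typ n}
    (hx : IsFracCommittee c (k + 1) x) (hu : ∀ i, (u i : ℝ) ≤ fracUtil x i)
    (hD : ∀ i ∉ D, u i ≤ 0) (hd0 : ∀ R, 0 ≤ d R) (hdx : ∀ R, d R ≤ x R)
    (hd1 : ∑ R, d R ≤ 1) (hdk : ∑ R, x R - ∑ R, d R ≤ k) (hdR₀ : x R₀ - d R₀ + 1 ≤ c R₀)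
    (hdD : ∀ R, d R ≠ 0 → R.1 ∩ D ⊆ R₀.1) :
    FracFeasible (Function.update c R₀ (c R₀ - 1)) k
      (fun i => u i - if i ∈ R₀.1 then 1 else 0) := by
  refine ⟨x - d, ⟨fun R => sub_nonneg.2 (hdx R), fun R => ?_, ?_⟩, fun i => ?_⟩
  · rcases eq_or_ne R R₀ with rfl | hR
    · have hc : 1 ≤ c R := by exact_mod_cast (by linarith [hd0 R, hdx R] : (1 : ℝ) ≤ c R)
      simp only [Pi.sub_apply, Function.update_self, Nat.cast_sub hc, Nat.cast_one]
      linarith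
    · simpa [hR] using (sub_le_self _ (hd0 R)).trans (hx.2.1 R)
  · simp only [Pi.sub_apply, sum_sub_distrib]
    exact hdk
  · rw [fracUtil_sub]
    by_cases hi : i ∈ R₀.1
    · have := (fracUtil_le_sum hd0 i).trans hd1
      simp only [hi, if_true, Int.cast_sub, Int.cast_one]
      linarith [hu i]
    by_cases hiD : i ∈ D
    · have hdi : fracUtil d i = 0 := by
        rw [fracUtil_eq_sum_filter]
        refine sum_eq_zero fun R hR => ?_
        by_contra hne
        exact hi (hdD R hne (mem_inter.2 ⟨(mem_filter.1 hR).2, hiD⟩))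
      simp only [hi, if_false, sub_zero, hdi]
      exact hu i
    · have hxd : 0 ≤ fracUtil x i - fracUtil d i := by
        rw [← fracUtil_sub]
        exact fracUtil_nonneg (fun R => sub_nonneg.2 (hdx R)) i
      have : (u i : ℝ) ≤ 0 := by exact_mod_cast hD i hiD
      simp only [hi, if_false, sub_zero]
      linarith

lemma exists_mul_eq_of_le {G t : ℝ} (ht : 0 ≤ t) (htG : t ≤ G) :
    ∃ a : ℝ, 0 ≤ a ∧ a ≤ 1 ∧ a * G = t := by
  rcases (ht.trans htG).eq_or_lt with rfl | hG
  · exact ⟨0, le_rfl, zero_le_one, by linarith⟩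
  · exact ⟨t / G, div_nonneg ht hG.le, div_le_one_of_le₀ htG hG.le, div_mul_cancel₀ t hG.ne'⟩

lemma exists_le_sum_eq_min {ι : Type*} [Fintype ι] [DecidableEq ι] {x : ι → ℝ}
    (hx : ∀ i, 0 ≤ x i) {F : Finset ι} {i₀ : ι} (hi₀ : i₀ ∈ F) :
    ∃ d : ι → ℝ, (∀ i, 0 ≤ d i) ∧ (∀ i, d i ≤ x i) ∧ (∀ i ∉ F, d i = 0) ∧
      d i₀ = min (x i₀) 1 ∧ ∑ i, d i = min (∑ i ∈ F, x i) 1 := by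
  set G := ∑ i ∈ F.erase i₀, x i
  set m := min (x i₀) 1
  set t := min G (1 - m)
  have hG : 0 ≤ G := sum_nonneg fun i _ => hx i
  have hm : m = x i₀ ∧ x i₀ ≤ 1 ∨ m = 1 ∧ 1 < x i₀ := min_cases _ _
  have ht : t = G ∧ G ≤ 1 - m ∨ t = 1 - m ∧ 1 - m < G := min_cases _ _
  have hm1 : m ≤ 1 := min_le_right _ _
  obtain ⟨a, ha0, ha1, haG⟩ :=
    exists_mul_eq_of_le (le_min hG (by linarith)) (min_le_left G (1 - m))
  refine ⟨fun i => (if i = i₀ then m else 0) + if i ∈ F.erase i₀ then a * x i else 0,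
    fun i => ?_, fun i => ?_, fun i hi => ?_, by simp, ?_⟩
  · apply add_nonneg <;> split_ifs
    exacts [le_min (hx i₀) zero_le_one, le_rfl, mul_nonneg ha0 (hx i), le_rfl]
  · rcases eq_or_ne i i₀ with rfl | hi
    · simp only [if_true, notMem_erase, if_false, add_zero]
      exact min_le_left _ _
    · simp only [hi, if_false, zero_add]
      split_ifs
      exacts [mul_le_of_le_one_left (hx i) ha1, hx i]
  · have hi' : i ≠ i₀ := fun h => hi (h ▸ hi₀)
    simp [hi', hi]
  · have hF : ∑ i ∈ F, x i = x i₀ + G := (add_sum_erase F x hi₀).symm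
    have hsum : a * G = t := haG
    simp only [sum_add_distrib, sum_ite_eq', mem_univ, if_true, sum_ite_mem, univ_inter,
      ← mul_sum]
    rw [hsum, hF]
    have hmx : m ≤ x i₀ := min_le_left _ _
    have htG : t ≤ G := min_le_left _ _
    have htm : t ≤ 1 - m := min_le_right _ _
    refine le_antisymm (le_min (by linarith) (by linarith)) ?_
    rcases hm with ⟨h, -⟩ | ⟨h, -⟩ <;> rcases ht with ⟨h', -⟩ | ⟨h', -⟩
    · exact (min_le_left _ _).trans (by linarith)
    all_goals exact (min_le_right _ _).trans (by linarith)

lemma exists_removal_of_le_traceMass {x : Typ n → ℝ} {D : Finset (Fin n)} {R₀ : Typ n}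
    (hx : IsFracCommittee c (k + 1) x) (hR₀ : 0 < x R₀)
    (hW : ∑ R, x R - k ≤ traceMass x D (R₀.1 ∩ D)) :
    ∃ d : Typ n → ℝ, (∀ R, 0 ≤ d R) ∧ (∀ R, d R ≤ x R) ∧ ∑ R, d R ≤ 1 ∧
      ∑ R, x R - ∑ R, d R ≤ k ∧ x R₀ - d R₀ + 1 ≤ c R₀ ∧ ∀ R, d R ≠ 0 → R.1 ∩ D ⊆ R₀.1 := by
  obtain ⟨hx0, hxc, hxk⟩ := hx
  obtain ⟨d, hd0, hdx, hdF, hdR₀, hd⟩ := exists_le_sum_eq_min hx0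
    (F := {R | R.1 ∩ D ⊆ R₀.1 ∩ D}) (i₀ := R₀) (by simp)
  have hxk' : ∑ R, x R ≤ k + 1 := by exact_mod_cast hxk
  have hc1 : (1 : ℝ) ≤ c R₀ := Nat.one_le_cast.2 (by exact_mod_cast hR₀.trans_le (hxc R₀))
  refine ⟨d, hd0, hdx, hd ▸ min_le_right _ _, ?_, ?_, fun R hR => ?_⟩
  · have := le_min hW (by linarith : ∑ R, x R - k ≤ 1)
    rw [traceMass] at this
    linarith
  · rcases min_cases (x R₀) 1 with ⟨h, -⟩ | ⟨h, -⟩ <;> linarith [hxc R₀]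
  · by_contra h
    exact hR (hdF R fun hRF => h ((mem_filter.1 hRF).2.trans inter_subset_left))

end Reduction

section Traces

variable {n : ℕ}

lemma intFeasible_of_traces {c : Typ n → ℕ} {k : ℕ} {u : Fin n → ℤ} {D : Finset (Fin n)}
    (hD : ∀ i ∉ D, u i ≤ 0) {T : Finset (Finset (Fin n))}
    (hT : ∀ F ∈ T, ∃ R, 0 < c R ∧ R.1 ∩ D = F) (hTk : #T ≤ k)
    (hTu : ∀ i ∈ D, u i ≤ #{F ∈ T | i ∈ F}) :
    IntFeasible c k u := by
  obtain ⟨S, hS, hinj, rfl⟩ := exists_subset_injOn_image_eq_of_surjOn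
    (f := fun R : Typ n => R.1 ∩ D) {R | 0 < c R} T fun F hF => hT F hF
  refine ⟨fun R => if R ∈ S then 1 else 0, ⟨fun R => ?_, ?_⟩, fun i => ?_⟩
  · dsimp only
    split_ifs with h
    exacts [hS h, Nat.zero_le _]
  · rw [sum_boole, Nat.cast_id, filter_mem_eq_inter, univ_inter, ← card_image_of_injOn hinj]
    exact hTk
  · rw [intUtil_indicator]
    by_cases hi : i ∈ D
    · refine (hTu i hi).trans ?_
      rw [filter_image]
      exact_mod_cast card_image_le.trans (card_le_card fun R => by simp +contextual)
    · exact (hD i hi).trans (Nat.cast_nonneg _)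

lemma exists_antichain_pushforward (x : Typ n → ℝ) (hx : ∀ R, 0 ≤ x R) (D : Finset (Fin n)) :
    ∃ (A : Finset (Finset (Fin n))) (w : Finset (Fin n) → ℝ),
      IsAntichain (· ⊆ ·) (A : Set (Finset (Fin n))) ∧
      (∀ F ∈ A, ∃ R, 0 < x R ∧ R.1 ∩ D = F) ∧
      (∀ F ∈ A, 0 < w F ∧ w F ≤ traceMass x D F) ∧
      ∑ F ∈ A, w F = ∑ R, x R ∧
      ∀ i ∈ D, fracUtil x i ≤ ∑ F ∈ A with i ∈ F, w F := by
  classical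
  set supp : Finset (Typ n) := {R | 0 < x R}
  set P := supp.image fun R => R.1 ∩ D
  set A := {F ∈ P | Maximal (· ∈ P) F}
  have hmax : ∀ R ∈ supp, ∃ F ∈ A, R.1 ∩ D ⊆ F := fun R hR => by
    obtain ⟨F, hle, hF⟩ := P.exists_le_maximal (mem_image_of_mem _ hR)
    exact ⟨F, mem_filter.2 ⟨hF.1, hF⟩, hle⟩
  choose! f hfA hf using hmax
  refine ⟨A, fun F => ∑ R ∈ supp with f R = F, x R, ?_, fun F hF => ?_, fun F hF => ⟨?_, ?_⟩,
    ?_, fun i hi => ?_⟩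
  · exact (setOfPred_maximal_antichain (· ∈ P)).subset fun F hF => (mem_filter.1 hF).2
  · obtain ⟨R, hR, rfl⟩ := mem_image.1 (mem_filter.1 hF).1
    exact ⟨R, (mem_filter.1 hR).2, rfl⟩
  · obtain ⟨R, hR, rfl⟩ := mem_image.1 (mem_filter.1 hF).1
    have hRf : f R = R.1 ∩ D :=
      ((mem_filter.1 hF).2.eq_of_le (mem_filter.1 (hfA R hR)).1 (hf R hR)).symm
    exact (mem_filter.1 hR).2.trans_le
      (single_le_sum (fun R _ => hx R) (mem_filter.2 ⟨hR, hRf⟩))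
  · refine sum_le_sum_of_subset_of_nonneg (fun R hR => ?_) fun R _ _ => hx R
    obtain ⟨hR', rfl⟩ := mem_filter.1 hR
    exact mem_filter.2 ⟨mem_univ R, hf R hR'⟩
  · rw [sum_fiberwise_of_maps_to hfA]
    exact sum_filter_of_ne fun R _ h => (hx R).lt_of_ne' h
  · calc fracUtil x i = ∑ R with i ∈ R.1 ∧ 0 < x R, x R := by
          rw [fracUtil_eq_sum_filter, ← filter_filter]
          exact (sum_filter_of_ne fun R _ h => (hx R).lt_of_ne' h).symm
      _ ≤ ∑ R ∈ supp with f R ∈ A.filter (i ∈ ·), x R := by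
          refine sum_le_sum_of_subset_of_nonneg (fun R hR => ?_) fun R _ _ => hx R
          obtain ⟨hiR, hR⟩ := (mem_filter.1 hR).2
          have hR' : R ∈ supp := mem_filter.2 ⟨mem_univ R, hR⟩
          exact mem_filter.2 ⟨hR', mem_filter.2 ⟨hfA R hR', hf R hR' (mem_inter.2 ⟨hiR, hi⟩)⟩⟩
      _ = ∑ F ∈ A with i ∈ F, ∑ R ∈ supp with f R = F, x R :=
          (sum_fiberwise_eq_sum_filter _ _ _ _).symm

end Traces

section Weights

variable {ι α : Type*}

lemma lt_card_of_le_sum {s : Finset ι} {w : ι → ℝ} (hw : ∀ i ∈ s, w i < 1) {z : ℤ} (hz : 0 < z)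
    (h : (z : ℝ) ≤ ∑ i ∈ s, w i) : z < #s := by
  rcases s.eq_empty_or_nonempty with rfl | hs
  · simp only [sum_empty, Int.cast_nonpos] at h
    omega
  · have : ∑ i ∈ s, w i < #s := by simpa using sum_lt_sum_of_nonempty hs hw
    exact_mod_cast h.trans_lt this

lemma sum_filter_lt_sum {s : Finset ι} {w : ι → ℝ} (hw : ∀ i ∈ s, 0 ≤ w i) {p : ι → Prop}
    [DecidablePred p] {a : ι} (ha : a ∈ s) (hpa : ¬ p a) (hwa : 0 < w a) :
    ∑ i ∈ s with p i, w i < ∑ i ∈ s, w i := by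
  rw [← sum_filter_add_sum_filter_not s p]
  have := single_le_sum (s := s.filter (¬ p ·)) (fun i hi => hw i (mem_filter.1 hi).1)
    (mem_filter.2 ⟨ha, hpa⟩)
  linarith

lemma sum_sum_filter_mem_le [DecidableEq α] (D : Finset α) {A : Finset (Finset α)}
    {w : Finset α → ℝ} (hw : ∀ F ∈ A, 0 ≤ w F) {μ : ℕ} (hμ : ∀ F ∈ A, #F ≤ μ) :
    ∑ i ∈ D, ∑ F ∈ A with i ∈ F, w F ≤ μ * ∑ F ∈ A, w F := by
  simp_rw [sum_filter]
  rw [sum_comm, mul_sum]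
  refine sum_le_sum fun F hF => ?_
  rw [← sum_filter, sum_const, nsmul_eq_mul]
  refine mul_le_mul_of_nonneg_right ?_ (hw F hF)
  exact_mod_cast (card_le_card fun i hi => (mem_filter.1 hi).2).trans (hμ F hF)

end Weights

section Covers

variable {α : Type*} [DecidableEq α] {D : Finset α} {u : α → ℤ} {A : Finset (Finset α)} {k : ℕ}

lemma covers_sdiff {S : Finset (Finset α)} (hdeg : ∀ i ∈ D, u i < #{F ∈ A | i ∈ F})
    (hS : ∀ i ∈ D, #{F ∈ S | i ∈ F} ≤ 1) : ∀ i ∈ D, u i ≤ #{F ∈ A \ S | i ∈ F} := by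
  intro i hi
  have : #{F ∈ A | i ∈ F} ≤ #{F ∈ A \ S | i ∈ F} + #{F ∈ S | i ∈ F} := by
    refine (card_le_card fun F hF => ?_).trans (card_union_le _ _)
    by_cases hFS : F ∈ S <;> simp_all
  have := hdeg i hi
  have := hS i hi
  omega

lemma covers_pair {E F : Finset α} (hu : ∀ i ∈ D, u i ≤ 1) (hEF : D ⊆ E ∪ F) :
    ∀ i ∈ D, u i ≤ #{G ∈ ({E, F} : Finset (Finset α)) | i ∈ G} := by
  intro i hi
  have : 0 < #{G ∈ ({E, F} : Finset (Finset α)) | i ∈ G} := by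
    rcases mem_union.1 (hEF hi) with h | h
    exacts [card_pos.2 ⟨E, by simp [h]⟩, card_pos.2 ⟨F, by simp [h]⟩]
  have := hu i hi
  omega

lemma exists_cover_of_card_le_succ (hdeg : ∀ i ∈ D, u i < #{F ∈ A | i ∈ F}) (hA : #A ≤ k + 1) :
    ∃ T ⊆ A, #T ≤ k ∧ ∀ i ∈ D, u i ≤ #{F ∈ T | i ∈ F} := by
  rcases A.eq_empty_or_nonempty with rfl | ⟨F, hF⟩
  · exact ⟨∅, subset_refl _, by simp, fun i hi => (hdeg i hi).le⟩
  refine ⟨A \ {F}, sdiff_subset, ?_, covers_sdiff hdeg fun i _ => ?_⟩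
  · rw [card_sdiff_of_subset (singleton_subset_iff.2 hF), card_singleton]
    omega
  · exact (card_filter_le _ _).trans (card_singleton F).le

end Covers

section Antichains

lemma card_le_choose_of_isAntichain_of_forall_mem {m : ℕ} {A : Finset (Finset (Fin (m + 1)))}
    (hA : IsAntichain (· ⊆ ·) (A : Set (Finset (Fin (m + 1))))) {i : Fin (m + 1)}
    (hi : ∀ F ∈ A, i ∈ F) : #A ≤ m.choose (m / 2) := by
  set φ : Finset (Fin (m + 1)) → Finset (Fin m) := fun F => {j | i.succAbove j ∈ F}
  have hφ : ∀ F, ∀ G ∈ A, φ F ⊆ φ G → F ⊆ G := fun F G hG h j hj => by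
    rcases eq_or_ne j i with rfl | hji
    · exact hi G hG
    obtain ⟨j, rfl⟩ := Fin.exists_succAbove_eq hji
    simpa [φ] using h (by simpa [φ] using hj)
  have hinj : Set.InjOn φ A := fun F hF G hG h =>
    (hφ F G hG h.le).antisymm (hφ G F hF h.ge)
  rw [← card_image_of_injOn hinj]
  refine (IsAntichain.sperner ?_).trans_eq (by simp)
  rw [coe_image]
  rintro _ ⟨F, hF, rfl⟩ _ ⟨G, hG, rfl⟩ hne hsub
  exact hA hF hG (fun h => hne (h ▸ rfl)) (hφ F G hG hsub)

lemma exists_mem_compl_mem {α : Type*} [Fintype α] [DecidableEq α] {𝒮 A : Finset (Finset α)}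
    (h𝒮 : ∀ E ∈ 𝒮, Eᶜ ∈ 𝒮) (hA : A ⊆ 𝒮) (hcard : #𝒮 < 2 * #A) : ∃ E ∈ A, Eᶜ ∈ A := by
  have hcompl : #(A.image compl) = #A := card_image_of_injective _ compl_injective
  have hunion : #(A ∪ A.image compl) ≤ #𝒮 := card_le_card <| union_subset hA fun E hE => by
    obtain ⟨F, hF, rfl⟩ := mem_image.1 hE
    exact h𝒮 F (hA hF)
  have := card_union_add_card_inter A (A.image compl)
  obtain ⟨E, hE⟩ : (A ∩ A.image compl).Nonempty := card_pos.1 (by omega)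
  obtain ⟨hEA, F, hF, rfl⟩ := And.imp_right mem_image.1 (mem_inter.1 hE)
  exact ⟨F, hF, hEA⟩

lemma two_le_card_of_isAntichain {α : Type*} [DecidableEq α] {D : Finset α}
    {A : Finset (Finset α)} (hA : IsAntichain (· ⊆ ·) (A : Set (Finset α)))
    (hAD : ∀ F ∈ A, F ⊂ D) (hdeg : ∀ i ∈ D, 1 < #{F ∈ A | i ∈ F}) {F : Finset α}
    (hF : F ∈ A) : 2 ≤ #F := by
  by_contra h
  obtain ⟨j, hjD, hFj⟩ : ∃ j ∈ D, F ⊆ {j} := by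
    rcases F.eq_empty_or_nonempty with rfl | ⟨j, hj⟩
    · obtain ⟨j, hj, -⟩ := exists_of_ssubset (hAD ∅ hF)
      exact ⟨j, hj, empty_subset _⟩
    · exact ⟨j, (hAD F hF).subset hj,
        fun a ha => mem_singleton.2 (card_le_one.1 (by omega) a ha j hj)⟩
  obtain ⟨G, hG, hGF⟩ := exists_mem_ne (hdeg j hjD) F
  obtain ⟨hGA, hjG⟩ := mem_filter.1 hG
  exact hGF (hA.eq hF hGA (hFj.trans (singleton_subset_iff.2 hjG))).symm

end Antichains

section FourVoters

variable {A : Finset (Finset (Fin 4))} {u : Fin 4 → ℤ} {k : ℕ}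

lemma eq_univ_of_forall_ssubset {D : Finset (Fin 4)} (hAD : ∀ F ∈ A, F ⊂ D)
    (htwo : ∀ F ∈ A, 2 ≤ #F) (hA : 4 ≤ #A) : D = univ := by
  by_contra hD
  have hD3 : #D < 4 := by simpa using card_lt_card (ssubset_univ_iff.2 hD)
  have hApairs : A ⊆ D.powersetCard 2 := fun F hF => mem_powersetCard.2
    ⟨(hAD F hF).subset, by have := card_lt_card (hAD F hF); have := htwo F hF; omega⟩
  have := (card_le_card hApairs).trans_eq (card_powersetCard 2 D)
  have := Nat.choose_le_choose 2 (Nat.le_of_lt_succ hD3)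
  have : Nat.choose 3 2 = 3 := rfl
  omega

lemma exists_three_pairs_cover (hu1 : ∀ i, 1 ≤ u i) (hu2 : ∀ i, u i ≤ 2) (hsum : ∑ i, u i ≤ 6) :
    ∃ T ⊆ powersetCard 2 univ, #T ≤ 3 ∧ ∀ i, u i ≤ #{F ∈ T | i ∈ F} := by
  set H : Finset (Fin 4) := {i | u i = 2}
  have hH : #H ≤ 2 := by
    have : ∑ i, (1 + if i ∈ H then 1 else 0 : ℤ) ≤ ∑ i, u i := sum_le_sum fun i _ => by
      have := hu1 i
      have := hu2 i
      split_ifs with h <;> simp_all [H]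
    simp only [sum_add_distrib, sum_boole, sum_const, card_univ, Fintype.card_fin,
      filter_mem_eq_inter, univ_inter, nsmul_eq_mul, Nat.cast_ofNat, mul_one] at this
    omega
  -- a pair `G` containing the voters who need two seats, and a perfect matching avoiding `G`
  obtain ⟨G, hHG, -, hG⟩ := exists_subsuperset_card_eq (subset_univ H) hH (by simp)
  obtain ⟨a, haG⟩ : G.Nonempty := card_pos.1 (by omega)
  obtain ⟨b, hbG⟩ : Gᶜ.Nonempty := card_pos.1 (by simp [card_compl, hG])
  rw [mem_compl] at hbG
  set F : Finset (Fin 4) := {a, b}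
  have hF : #F = 2 := card_pair fun h => hbG (h ▸ haG)
  have hFG : F ≠ G := fun h => hbG (h ▸ mem_insert_of_mem (mem_singleton_self b))
  have hFcG : Fᶜ ≠ G := fun h => (mem_compl.1 (h ▸ haG)) (mem_insert_self a {b})
  refine ⟨{G, F, Fᶜ}, ?_, card_le_three, fun i => ?_⟩
  · simp only [insert_subset_iff, singleton_subset_iff, mem_powersetCard, subset_univ, true_and,
      card_compl, hF, hG, Fintype.card_fin]
  obtain ⟨X, hX, hXG, hiX⟩ : ∃ X ∈ ({G, F, Fᶜ} : Finset (Finset (Fin 4))), X ≠ G ∧ i ∈ X := by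
    by_cases hiF : i ∈ F
    · exact ⟨F, by simp, hFG, hiF⟩
    · exact ⟨Fᶜ, by simp, hFcG, mem_compl.2 hiF⟩
  by_cases hiG : i ∈ G
  · have : 1 < #{Y ∈ ({G, F, Fᶜ} : Finset (Finset (Fin 4))) | i ∈ Y} :=
      one_lt_card.2 ⟨G, by simp [hiG], X, mem_filter.2 ⟨hX, hiX⟩, hXG.symm⟩
    have := hu2 i
    omega
  · have : u i ≠ 2 := fun h => hiG (hHG (by simp [H, h]))
    have : 0 < #{Y ∈ ({G, F, Fᶜ} : Finset (Finset (Fin 4))) | i ∈ Y} :=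
      card_pos.2 ⟨X, mem_filter.2 ⟨hX, hiX⟩⟩
    have := hu2 i
    omega

lemma exists_cover_of_mem_card_eq_three (hA : IsAntichain (· ⊆ ·) (A : Set (Finset (Fin 4))))
    {E : Finset (Fin 4)} (hE : E ∈ A) (hE3 : #E = 3) (hk : 2 ≤ k) (hcard : k + 2 ≤ #A)
    (hu : ∀ i, u i < k) (hdeg : ∀ i, 0 < #{F ∈ A | i ∈ F}) :
    ∃ T ⊆ A, #T ≤ k ∧ ∀ i, u i ≤ #{F ∈ T | i ∈ F} := by
  obtain ⟨d, hd⟩ : ∃ d, Eᶜ = {d} := card_eq_one.1 (by simp [card_compl, hE3])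
  have hdA : ∀ F ∈ A.erase E, d ∈ F := fun F hF => by
    obtain ⟨hFE, hF⟩ := mem_erase.1 hF
    by_contra hdF
    refine hFE (hA.eq hF hE fun j hj => ?_)
    by_contra hjE
    have : j ∈ ({d} : Finset (Fin 4)) := hd ▸ mem_compl.2 hjE
    exact hdF (mem_singleton.1 this ▸ hj)
  have h3 : #(A.erase E) ≤ 3 := card_le_choose_of_isAntichain_of_forall_mem
    (hA.subset (coe_subset.2 (erase_subset E A))) hdA
  have hk2 : k ≤ 2 := by
    have := card_erase_add_one hE
    omega
  obtain ⟨F, hF⟩ := card_pos.1 (hdeg d)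
  obtain ⟨hFA, hdF⟩ := mem_filter.1 hF
  have hEF : (univ : Finset (Fin 4)) ⊆ E ∪ F := fun j _ => by
    by_cases hj : j ∈ E
    · exact mem_union_left F hj
    · have : j ∈ ({d} : Finset (Fin 4)) := hd ▸ mem_compl.2 hj
      exact mem_union_right E (mem_singleton.1 this ▸ hdF)
  refine ⟨{E, F}, insert_subset hE (singleton_subset_iff.2 hFA),
    card_le_two.trans (by omega), fun i => ?_⟩
  exact covers_pair (fun i _ => by have := hu i; omega) hEF i (mem_univ i)

lemma exists_cover_of_forall_card_eq_two (hpair : ∀ F ∈ A, #F = 2) (hcard : k + 2 ≤ #A)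
    (hk : 2 ≤ k) (hu1 : ∀ i, 1 ≤ u i) (hu : ∀ i, u i < k)
    (hdeg : ∀ i, u i < #{F ∈ A | i ∈ F}) (hsum : ∑ i, u i ≤ 2 * k) :
    ∃ T ⊆ A, #T ≤ k ∧ ∀ i, u i ≤ #{F ∈ T | i ∈ F} := by
  have hApairs : A ⊆ powersetCard 2 univ := fun F hF =>
    mem_powersetCard.2 ⟨subset_univ F, hpair F hF⟩
  have h6 : #(powersetCard 2 (univ : Finset (Fin 4))) = 6 := by
    rw [card_powersetCard, card_univ, Fintype.card_fin]
    rfl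
  obtain ⟨E, hE, hEc⟩ := exists_mem_compl_mem (fun E hE => by
    rw [mem_powersetCard] at hE ⊢
    simp [card_compl, hE.2]) hApairs (by omega)
  have hEne : E ≠ Eᶜ := fun h => by
    obtain ⟨a, ha⟩ := card_pos.1 (by rw [hpair E hE]; norm_num)
    exact (mem_compl.1 (h ▸ ha)) ha
  have hEcov : ∀ i, #{G ∈ ({E, Eᶜ} : Finset (Finset (Fin 4))) | i ∈ G} ≤ 1 := fun i => by
    by_cases hi : i ∈ E <;> simp [filter_insert, filter_singleton, hi]
  by_cases hk2 : k = 2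
  · refine ⟨{E, Eᶜ}, insert_subset hE (singleton_subset_iff.2 hEc), card_le_two.trans hk2.ge,
      fun i => covers_pair (fun i _ => ?_) (fun j _ => ?_) i (mem_univ i)⟩
    · have := hu i
      omega
    · by_cases j ∈ E <;> simp_all
  by_cases hA : #A = k + 2
  · refine ⟨A \ {E, Eᶜ}, sdiff_subset, ?_,
      fun i => covers_sdiff (fun i _ => hdeg i) (fun i _ => hEcov i) i (mem_univ i)⟩
    rw [card_sdiff_of_subset (insert_subset hE (singleton_subset_iff.2 hEc)), card_pair hEne]
    omega
  have hA6 := card_le_card hApairs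
  have hk3 : k = 3 := by omega
  obtain rfl : A = powersetCard 2 univ := eq_of_subset_of_card_le hApairs (by omega)
  subst hk3
  exact exists_three_pairs_cover hu1 (fun i => by have := hu i; omega) hsum

lemma exists_cover_of_isAntichain {D : Finset (Fin 4)}
    (hA : IsAntichain (· ⊆ ·) (A : Set (Finset (Fin 4)))) (hAD : ∀ F ∈ A, F ⊂ D)
    (hu : ∀ i ∈ D, 1 ≤ u i) (hdeg : ∀ i ∈ D, u i < #{F ∈ A | i ∈ F})
    (hmiss : ∀ i ∈ D, ∀ F ∈ A, i ∉ F → u i < k)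
    (hsum : (∀ F ∈ A, #F ≤ 2) → ∑ i ∈ D, u i ≤ 2 * k) :
    ∃ T ⊆ A, #T ≤ k ∧ ∀ i ∈ D, u i ≤ #{F ∈ T | i ∈ F} := by
  by_cases hsmall : #A ≤ k + 1
  · exact exists_cover_of_card_le_succ hdeg hsmall
  push Not at hsmall
  obtain ⟨F₀, hF₀⟩ : A.Nonempty := card_pos.1 (by omega)
  have hk : 2 ≤ k := by
    obtain ⟨i, hi, hiF₀⟩ := exists_of_ssubset (hAD F₀ hF₀)
    have := hu i hi
    have := hmiss i hi F₀ hF₀ hiF₀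
    omega
  have hu' : ∀ i ∈ D, u i < k := fun i hi => by
    by_contra h
    have : #A ≤ 3 := card_le_choose_of_isAntichain_of_forall_mem hA fun F hF => by
      by_contra hiF
      exact h (hmiss i hi F hF hiF)
    omega
  have htwo : ∀ F ∈ A, 2 ≤ #F := fun F hF => two_le_card_of_isAntichain hA hAD
    (fun i hi => by have := hu i hi; have := hdeg i hi; omega) hF
  obtain rfl : D = univ := eq_univ_of_forall_ssubset hAD htwo (by omega)
  simp only [mem_univ, true_implies] at hu hdeg hu' hsum ⊢
  by_cases htriple : ∃ E ∈ A, #E = 3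
  · obtain ⟨E, hE, hE3⟩ := htriple
    exact exists_cover_of_mem_card_eq_three hA hE hE3 hk hsmall hu'
      fun i => by have := hu i; have := hdeg i; omega
  · have hpair : ∀ F ∈ A, #F = 2 := fun F hF => by
      have := htwo F hF
      have := card_lt_card (hAD F hF)
      rw [card_univ, Fintype.card_fin] at this
      have : #F ≠ 3 := fun h => htriple ⟨F, hF, h⟩
      omega
    exact exists_cover_of_forall_card_eq_two hpair hsmall hk hu hu' hdeg
      (hsum fun F hF => (hpair F hF).le)

end FourVoters

lemma intFeasible_of_forall_traceMass_lt {c : Typ 4 → ℕ} {k : ℕ} {u : Fin 4 → ℤ}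
    {x : Typ 4 → ℝ} {D : Finset (Fin 4)} (hx : IsFracCommittee c (k + 1) x)
    (hu : ∀ i, (u i : ℝ) ≤ fracUtil x i) (hD1 : ∀ i ∈ D, 1 ≤ u i) (hD0 : ∀ i ∉ D, u i ≤ 0)
    (hhard : ∀ R, 0 < x R → traceMass x D (R.1 ∩ D) < ∑ R, x R - k) :
    IntFeasible c (k + 1) u := by
  obtain ⟨hx0, hxc, hxk⟩ := hx
  have hxk' : ∑ R, x R ≤ k + 1 := by exact_mod_cast hxk
  obtain ⟨A, w, hA, hAx, hw, hwsum, hcov⟩ := exists_antichain_pushforward x hx0 D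
  have hAD : ∀ F ∈ A, F ⊂ D := fun F hF => by
    obtain ⟨R, hR, rfl⟩ := hAx F hF
    refine ssubset_of_subset_of_ne inter_subset_right fun h => ?_
    have hlt := hhard R hR
    have hall : traceMass x D D = ∑ R, x R := by simp [traceMass]
    rw [h, hall] at hlt
    linarith [(Nat.cast_nonneg k : (0 : ℝ) ≤ k)]
  have hw0 : ∀ F ∈ A, 0 ≤ w F := fun F hF => (hw F hF).1.le
  have hw1 : ∀ F ∈ A, w F < 1 := fun F hF => by
    obtain ⟨R, hR, rfl⟩ := hAx F hF
    linarith [(hw _ hF).2, hhard R hR]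
  have hcov' : ∀ i ∈ D, (u i : ℝ) ≤ ∑ F ∈ A with i ∈ F, w F := fun i hi =>
    (hu i).trans (hcov i hi)
  obtain ⟨T, hTA, hTk, hTu⟩ := exists_cover_of_isAntichain (k := k + 1) hA hAD hD1
    (fun i hi => lt_card_of_le_sum (fun F hF => hw1 F (mem_filter.1 hF).1) (hD1 i hi)
      (hcov' i hi))
    (fun i hi F hF hiF => by
      have := sum_filter_lt_sum hw0 hF (p := (i ∈ ·)) hiF (hw F hF).1
      have : (u i : ℝ) < k + 1 := by linarith [hcov' i hi]
      exact_mod_cast this)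
    (fun h2 => by
      have := sum_sum_filter_mem_le D hw0 h2
      have : (∑ i ∈ D, u i : ℝ) ≤ 2 * (k + 1) := by
        push_cast at this ⊢
        linarith [sum_le_sum hcov']
      exact_mod_cast this)
  refine intFeasible_of_traces hD0 (fun F hF => ?_) hTk hTu
  obtain ⟨R, hR, hRF⟩ := hAx F (hTA hF)
  exact ⟨R, by exact_mod_cast hR.trans_le (hxc R), hRF⟩

/-- For `n = 4` voters, every instance `(c, k)` is integralizable. -/
theorem stmt12 (c : Typ 4 → ℕ) (k : ℕ) :
    Integralizable c k := by
  induction k generalizing c with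
  | zero =>
    rintro u ⟨x, hx, hu⟩
    refine intFeasible_of_nonpos fun i => ?_
    have := (hu i).trans ((fracUtil_le_sum hx.1 i).trans hx.2.2)
    exact_mod_cast this
  | succ k ih =>
    rintro u ⟨x, hx, hu⟩
    set D : Finset (Fin 4) := {i | 1 ≤ u i}
    have hD0 : ∀ i ∉ D, u i ≤ 0 := fun i hi => by
      simp only [D, mem_filter, mem_univ, true_and, not_le] at hi
      omega
    by_cases hshave : ∃ R₀, 0 < x R₀ ∧ ∑ R, x R - k ≤ traceMass x D (R₀.1 ∩ D)
    · obtain ⟨R₀, hR₀, hW⟩ := hshave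
      obtain ⟨d, hd0, hdx, hd1, hdk, hdR₀, hdD⟩ := exists_removal_of_le_traceMass hx hR₀ hW
      have hc : 0 < c R₀ := by exact_mod_cast hR₀.trans_le (hx.2.1 R₀)
      refine intFeasible_succ_of_update hc (ih _ _ ?_)
      exact fracFeasible_update_of_removal hx hu hD0 hd0 hdx hd1 hdk hdR₀ hdD
    · push Not at hshave
      exact intFeasible_of_forall_traceMass_lt hx hu (fun i hi => (mem_filter.1 hi).2) hD0
        hshave
end
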